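/- Let (A, M, {R_α}_{α∈Ω}) be a relative Rota-Baxter family algebra, and let (μ₁, l₁, r₁, {R_{1,α}}) and (μ₁', l₁', r₁', {R'_{1,α}}) determine two infinitesimal deformations, i.e., the corresponding truncated structures (μ_t, l_t, r_t, {(R_t)_α}) and (μ'_t, l'_t, r'_t, {(R'_t)_α}) on A[ε] = A ⊕ A and M[ε] = M ⊕ M are relative Rota-Baxter family algebras over k[t]/(t²). Let φ₁ : A → A and ψ₁ : M → M be linear maps and set φ_t(a, a') := (a, φ₁(a) + a') and ψ_t(u, u') := (u, ψ₁(u) + u'). Then (φ_t, ψ_t) is a morphism of relative Rota-Baxter family algebras over k[t]/(t²) — i.e., φ_t(μ_t(x,y)) = μ'_t(φ_t x, φ_t y), ψ_t(l_t(x, w)) = l'_t(φ_t x, ψ_t w), ψ_t(r_t(w, x)) = r'_t(ψ_t w, φ_t x), and φ_t ∘ (R_t)_α = (R'_t)_α ∘ ψ_t for all α ∈ Ω — if and only if for all a, b ∈ A, u ∈ M, α ∈ Ω: μ₁(a,b) − μ₁'(a,b) = a·φ₁(b) − φ₁(a·b) + φ₁(a)·b; l₁(a,u) − l₁'(a,u)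 = a·ψ₁(u) − ψ₁(a·u) + φ₁(a)·u; r₁(u,a) − r₁'(u,a) = u·φ₁(a) − ψ₁(u·a) + ψ₁(u)·a; and R_{1,α}(u) − R'_{1,α}(u) = R_α(ψ₁(u)) − φ₁(R_α(u)). -/
import Mathlib


variable {k : Type*} [Field k] [CharZero k]
variable {Ω : Type*} [Semigroup Ω]
variable {A : Type*} [NonUnitalRing A] [Module k A] [SMulCommClass k A A] [IsScalarTower k A A]
variable {M : Type*} [AddCommGroup M] [Module k M]

/-- The truncated multiplication `μ_t` on `A[ε] = A ⊕ A`: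
`μ_t((a,a'),(b,b')) = (a·b, μ₁(a,b) + a·b' + a'·b)`. -/
def mulT (mu1 : A →ₗ[k] A →ₗ[k] A) : A × A → A × A → A × A :=
  fun x y => (x.1 * y.1, mu1 x.1 y.1 + x.1 * y.2 + x.2 * y.1)

/-- The truncated left action `l_t` of `A[ε]` on `M[ε] = M ⊕ M`. -/
def lactT (lact : A →ₗ[k] M →ₗ[k] M) (l1 : A →ₗ[k] M →ₗ[k] M) :
    A × A → M × M → M × M :=
  fun x w => (lact x.1 w.1, l1 x.1 w.1 + lact x.1 w.2 + lact x.2 w.1)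

/-- The truncated right action `r_t` of `A[ε]` on `M[ε] = M ⊕ M`. -/
def ractT (ract : M →ₗ[k] A →ₗ[k] M) (r1 : M →ₗ[k] A →ₗ[k] M) :
    M × M → A × A → M × M :=
  fun w x => (ract w.1 x.1, r1 w.1 x.1 + ract w.1 x.2 + ract w.2 x.1)

/-- The truncated family of operators `(R_t)_α(u,u') = (R_α u, R_{1,α} u + R_α u')`. -/
def RT (R R1 : Ω → M →ₗ[k] A) (α : Ω) : M × M → A × A :=
  fun w => (R α w.1, R1 α w.1 + R α w.2)

/- STATEMENT 16: given two infinitesimal deformations of a relative Rota-Baxter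
family algebra `(A, M, {R_α})`, the pair
`φ_t(a,a') = (a, φ₁ a + a')`, `ψ_t(u,u') = (u, ψ₁ u + u')` is a morphism of
relative Rota-Baxter family algebras over `k[t]/(t²)` if and only if the four
displayed equations hold. -/

theorem equivalence_of_infinitesimal_deformations_iff
    (lact : A →ₗ[k] M →ₗ[k] M) (ract : M →ₗ[k] A →ₗ[k] M)
    -- `(A, M, {R_α})` is a relative Rota-Baxter family algebra:
    (hlact : ∀ (a b : A) (u : M), lact (a * b) u = lact a (lact b u))
    (hmid : ∀ (a : A) (u : M) (b : A), ract (lact a u) b = lact a (ract u b))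
    (hract : ∀ (u : M) (a b : A), ract (ract u a) b = ract u (a * b))
    (R : Ω → M →ₗ[k] A)
    (hRB : ∀ (α β : Ω) (u v : M),
      R α u * R β v = R (α * β) (lact (R α u) v + ract u (R β v)))
    -- the two infinitesimal data
    (mu1 : A →ₗ[k] A →ₗ[k] A) (l1 : A →ₗ[k] M →ₗ[k] M) (r1 : M →ₗ[k] A →ₗ[k] M)
    (R1 : Ω → M →ₗ[k] A)
    (mu1' : A →ₗ[k] A →ₗ[k] A) (l1' : A →ₗ[k] M →ₗ[k] M) (r1' : M →ₗ[k] A →ₗ[k] M)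
    (R1' : Ω → M →ₗ[k] A)
    -- both determine infinitesimal deformations, i.e. the truncated structures
    -- are relative Rota-Baxter family algebras over `k[t]/(t²)`:
    (hdef : (∀ x y z : A × A, mulT mu1 (mulT mu1 x y) z = mulT mu1 x (mulT mu1 y z)) ∧
      (∀ (x y : A × A) (w : M × M),
        lactT lact l1 (mulT mu1 x y) w = lactT lact l1 x (lactT lact l1 y w)) ∧
      (∀ (x : A × A) (w : M × M) (y : A × A),
        ractT ract r1 (lactT lact l1 x w) y = lactT lact l1 x (ractT ract r1 w y)) ∧
      (∀ (w : M × M) (x y : A × A),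
        ractT ract r1 (ractT ract r1 w x) y = ractT ract r1 w (mulT mu1 x y)) ∧
      (∀ (α β : Ω) (u v : M × M),
        mulT mu1 (RT R R1 α u) (RT R R1 β v)
          = RT R R1 (α * β)
              (lactT lact l1 (RT R R1 α u) v + ractT ract r1 u (RT R R1 β v))))
    (hdef' : (∀ x y z : A × A, mulT mu1' (mulT mu1' x y) z = mulT mu1' x (mulT mu1' y z)) ∧
      (∀ (x y : A × A) (w : M × M),
        lactT lact l1' (mulT mu1' x y) w = lactT lact l1' x (lactT lact l1' y w)) ∧
      (∀ (x : A × A) (w : M × M) (y : A × A),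
        ractT ract r1' (lactT lact l1' x w) y = lactT lact l1' x (ractT ract r1' w y)) ∧
      (∀ (w : M × M) (x y : A × A),
        ractT ract r1' (ractT ract r1' w x) y = ractT ract r1' w (mulT mu1' x y)) ∧
      (∀ (α β : Ω) (u v : M × M),
        mulT mu1' (RT R R1' α u) (RT R R1' β v)
          = RT R R1' (α * β)
              (lactT lact l1' (RT R R1' α u) v + ractT ract r1' u (RT R R1' β v))))
    -- the linear maps defining the candidate equivalence
    (phi1 : A →ₗ[k] A) (psi1 : M →ₗ[k] M) :
    -- `(φ_t, ψ_t)` is a morphism of relative Rota-Baxter family algebras over `k[t]/(t²)`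
    ((∀ x y : A × A,
        ((mulT mu1 x y).1, phi1 (mulT mu1 x y).1 + (mulT mu1 x y).2)
          = mulT mu1' (x.1, phi1 x.1 + x.2) (y.1, phi1 y.1 + y.2)) ∧
     (∀ (x : A × A) (w : M × M),
        ((lactT lact l1 x w).1, psi1 (lactT lact l1 x w).1 + (lactT lact l1 x w).2)
          = lactT lact l1' (x.1, phi1 x.1 + x.2) (w.1, psi1 w.1 + w.2)) ∧
     (∀ (w : M × M) (x : A × A),
        ((ractT ract r1 w x).1, psi1 (ractT ract r1 w x).1 + (ractT ract r1 w x).2)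
          = ractT ract r1' (w.1, psi1 w.1 + w.2) (x.1, phi1 x.1 + x.2)) ∧
     (∀ (α : Ω) (w : M × M),
        ((RT R R1 α w).1, phi1 (RT R R1 α w).1 + (RT R R1 α w).2)
          = RT R R1' α (w.1, psi1 w.1 + w.2)))
    ↔
    ((∀ a b : A, mu1 a b - mu1' a b = a * phi1 b - phi1 (a * b) + phi1 a * b) ∧
     (∀ (a : A) (u : M),
        l1 a u - l1' a u = lact a (psi1 u) - psi1 (lact a u) + lact (phi1 a) u) ∧
     (∀ (u : M) (a : A),
        r1 u a - r1' u a = ract u (phi1 a) - psi1 (ract u a) + ract (psi1 u) a) ∧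
     (∀ (α : Ω) (u : M),
        R1 α u - R1' α u = R α (psi1 u) - phi1 (R α u))) := by
  constructor
  · rintro ⟨h1, h2, h3, h4⟩
    refine ⟨fun a b => ?_, fun a u => ?_, fun u a => ?_, fun α u => ?_⟩
    · have h := congrArg Prod.snd (h1 (a, 0) (b, 0))
      simp only [mulT, mul_zero, zero_mul, add_zero, map_add] at h
      linear_combination (norm := abel) h
    · have h := congrArg Prod.snd (h2 (a, 0) (u, 0))
      simp only [lactT, map_zero, add_zero, map_add, LinearMap.zero_apply] at h
      linear_combination (norm := abel) h
    · have h := congrArg Prod.snd (h3 (u, 0) (a, 0))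
      simp only [ractT, map_zero, add_zero, map_add, LinearMap.zero_apply] at h
      linear_combination (norm := abel) h
    · have h := congrArg Prod.snd (h4 α (u, 0))
      simp only [RT, map_zero, add_zero, map_add] at h
      linear_combination (norm := abel) h
  · rintro ⟨h1, h2, h3, h4⟩
    refine ⟨fun x y => ?_, fun x w => ?_, fun w x => ?_, fun α w => ?_⟩
    · obtain ⟨a, a'⟩ := x; obtain ⟨b, b'⟩ := y
      refine Prod.ext rfl ?_
      simp only [mulT, map_add, mul_add, add_mul]
      linear_combination (norm := abel) h1 a b
    · obtain ⟨a, a'⟩ := x; obtain ⟨u, u'⟩ := w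
      refine Prod.ext rfl ?_
      simp only [lactT, map_add, LinearMap.add_apply]
      linear_combination (norm := abel) h2 a u
    · obtain ⟨u, u'⟩ := w; obtain ⟨a, a'⟩ := x
      refine Prod.ext rfl ?_
      simp only [ractT, map_add, LinearMap.add_apply]
      linear_combination (norm := abel) h3 u a
    · obtain ⟨u, u'⟩ := w
      refine Prod.ext rfl ?_
      simp only [RT, map_add]
      linear_combination (norm := abel) h4 α u
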